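/- For all real x, x * tanh(x) ≤ x^2 - x^4/3 + 2*x^6/15. -/

import Mathlib

/-!
Since `tanh' = 1 - tanh ^ 2`, each Taylor bound for `tanh` on `[0, ∞)` yields the next one by
comparing derivatives: `tanh x ≤ x` gives `x - x ^ 3 / 3 ≤ tanh x`, which in turn gives
`tanh x ≤ x - x ^ 3 / 3 + 2 * x ^ 5 / 15`. Multiplying by `x` and using that `x * tanh x` is
even proves the claim on all of `ℝ`.
-/

open Real Set

lemma le_of_hasDerivAt_le_of_nonneg {f g f' g' : ℝ → ℝ} (hf : ∀ t, HasDerivAt f (f' t) t)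
    (hg : ∀ t, HasDerivAt g (g' t) t) (h₀ : f 0 ≤ g 0) (hle : ∀ t, 0 < t → f' t ≤ g' t)
    {x : ℝ} (hx : 0 ≤ x) : f x ≤ g x := by
  have hmono : MonotoneOn (g - f) (Ici 0) := by
    refine monotoneOn_of_hasDerivWithinAt_nonneg (convex_Ici 0)
      (fun t _ ↦ ((hg t).sub (hf t)).continuousAt.continuousWithinAt)
      (fun t _ ↦ ((hg t).sub (hf t)).hasDerivWithinAt) fun t ht ↦ ?_
    rw [interior_Ici] at ht
    exact sub_nonneg.mpr (hle t ht)
  have := hmono self_mem_Ici hx hx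
  simp only [Pi.sub_apply] at this
  linarith

namespace Real

lemma hasDerivAt_tanh (x : ℝ) : HasDerivAt tanh (1 - tanh x ^ 2) x := by
  have hcosh : cosh x ≠ 0 := (cosh_pos x).ne'
  have h := (hasDerivAt_sinh x).div (hasDerivAt_cosh x) hcosh
  rw [show sinh / cosh = tanh from funext fun y ↦ (tanh_eq_sinh_div_cosh y).symm] at h
  refine h.congr_deriv ?_
  rw [tanh_eq_sinh_div_cosh]
  field_simp

lemma tanh_nonneg {x : ℝ} (hx : 0 ≤ x) : 0 ≤ tanh x := by
  rw [tanh_eq_sinh_div_cosh]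
  exact div_nonneg (sinh_nonneg_iff.mpr hx) (cosh_pos x).le

lemma tanh_le_self {x : ℝ} (hx : 0 ≤ x) : tanh x ≤ x :=
  le_of_hasDerivAt_le_of_nonneg hasDerivAt_tanh (fun t ↦ hasDerivAt_id t) (by simp)
    (fun t _ ↦ by nlinarith) hx

lemma sub_cube_div_three_le_tanh {x : ℝ} (hx : 0 ≤ x) : x - x ^ 3 / 3 ≤ tanh x := by
  have hderiv (t : ℝ) : HasDerivAt (fun t ↦ t - t ^ 3 / 3) (1 - t ^ 2) t :=
    ((hasDerivAt_id' t).sub ((hasDerivAt_pow 3 t).div_const 3)).congr_deriv (by ring)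
  refine le_of_hasDerivAt_le_of_nonneg hderiv hasDerivAt_tanh (by simp) (fun t ht ↦ ?_) hx
  have h₀ := tanh_nonneg ht.le
  have h₁ := tanh_le_self ht.le
  nlinarith

lemma tanh_le_taylor_five {x : ℝ} (hx : 0 ≤ x) :
    tanh x ≤ x - x ^ 3 / 3 + 2 * x ^ 5 / 15 := by
  have hderiv (t : ℝ) : HasDerivAt (fun t ↦ t - t ^ 3 / 3 + 2 * t ^ 5 / 15)
      (1 - t ^ 2 + 2 * t ^ 4 / 3) t :=
    (((hasDerivAt_id' t).sub ((hasDerivAt_pow 3 t).div_const 3)).add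
      (((hasDerivAt_pow 5 t).const_mul 2).div_const 15)).congr_deriv (by ring)
  refine le_of_hasDerivAt_le_of_nonneg hasDerivAt_tanh hderiv (by simp) (fun t ht ↦ ?_) hx
  suffices t ^ 2 - 2 * t ^ 4 / 3 ≤ tanh t ^ 2 by linarith
  rcases le_total (t ^ 2) 3 with ht3 | ht3
  · have hcubic : 0 ≤ t - t ^ 3 / 3 := by nlinarith
    calc t ^ 2 - 2 * t ^ 4 / 3 ≤ (t - t ^ 3 / 3) ^ 2 := by nlinarith [pow_nonneg ht.le 6]
      _ ≤ tanh t ^ 2 := pow_le_pow_left₀ hcubic (sub_cube_div_three_le_tanh ht.le) 2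
  · nlinarith [sq_nonneg (tanh t)]

end Real

theorem mul_tanh_taylor_upper (x : ℝ) :
    x * Real.tanh x ≤ x ^ 2 - x ^ 4 / 3 + 2 * x ^ 6 / 15 := by
  have hnonneg {y : ℝ} (hy : 0 ≤ y) : y * tanh y ≤ y ^ 2 - y ^ 4 / 3 + 2 * y ^ 6 / 15 := by
    linear_combination mul_le_mul_of_nonneg_left (tanh_le_taylor_five hy) hy
  rcases le_total 0 x with hx | hx
  · exact hnonneg hx
  · have h := hnonneg (neg_nonneg.mpr hx)
    rw [tanh_neg] at h
    linear_combination h
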